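/- The function x ↦ -h'(x)/h(x)^{3/2} is bounded on (0,∞), where h(x) = tanh(x)/x. That is, there exists C > 0 such that -h'(x) ≤ C · h(x)^{3/2} for all x > 0. -/

import Mathlib

/-!
With `t = tanh x`, `-h'(x) = (t - x (1 - t²)) / x²`. Dropping the nonnegative term `x (1 - t²)`
gives `-h' ≤ t / x² = h / x`, and `t ≤ x` gives `-h' ≤ t² / x = x h²`. The geometric mean of the two
bounds is `h^{3/2}`, so the claim holds with `C = 1`.
-/

open Real

namespace Real

theorem hasDerivAt_tanh (x : ℝ) : HasDerivAt tanh (1 - tanh x ^ 2) x := by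
  have hquot := (hasDerivAt_sinh x).div (hasDerivAt_cosh x) (cosh_pos x).ne'
  have htanh : sinh / cosh = tanh := funext fun y => (tanh_eq_sinh_div_cosh y).symm
  rw [htanh] at hquot
  refine hquot.congr_deriv ?_
  rw [tanh_eq_sinh_div_cosh, div_pow, one_sub_div (pow_ne_zero 2 (cosh_pos x).ne')]
  ring

theorem tanh_nonneg {x : ℝ} (hx : 0 ≤ x) : 0 ≤ tanh x := by
  rw [tanh_eq_sinh_div_cosh]
  exact div_nonneg (sinh_nonneg_iff.2 hx) (cosh_pos x).le

theorem tanh_le_self {x : ℝ} (hx : 0 ≤ x) : tanh x ≤ x := by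
  have hderiv (y : ℝ) : HasDerivAt (fun y => y - tanh y) (tanh y ^ 2) y :=
    ((hasDerivAt_id' y).sub (hasDerivAt_tanh y)).congr_deriv (by ring)
  have hmono : Monotone fun y => y - tanh y :=
    monotone_of_deriv_nonneg (fun y => (hderiv y).differentiableAt)
      fun y => (hderiv y).deriv ▸ sq_nonneg _
  simpa using hmono hx

end Real

theorem hasDerivAt_tanh_div_self {x : ℝ} (hx : x ≠ 0) :
    HasDerivAt (fun y => tanh y / y) (-((tanh x - x * (1 - tanh x ^ 2)) / x ^ 2)) x :=
  ((hasDerivAt_tanh x).div (hasDerivAt_id' x) hx).congr_deriv (by ring)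

theorem le_sqrt_mul_of_le_of_le {u a b : ℝ} (ha : u ≤ a) (hb : u ≤ b) : u ≤ √(a * b) := by
  rcases le_total u 0 with hu | hu
  · exact hu.trans (sqrt_nonneg _)
  · exact le_sqrt_of_sq_le (sq u ▸ mul_le_mul ha hb hu (hu.trans ha))

/-- The function x ↦ -h'(x)/h(x)^{3/2} is bounded on (0,∞) for h(x) = tanh(x)/x:
there is C > 0 with -h'(x) ≤ C · h(x)^{3/2} for all x > 0. -/
theorem neg_deriv_tanh_div_le_rpow :
    ∃ C : ℝ, 0 < C ∧ ∀ x : ℝ, 0 < x →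
      -(deriv (fun y : ℝ => Real.tanh y / y) x)
        ≤ C * (Real.tanh x / x) ^ (3 / 2 : ℝ) := by
  refine ⟨1, one_pos, fun x hx => ?_⟩
  rw [(hasDerivAt_tanh_div_self hx.ne').deriv, neg_neg, one_mul]
  have hsech : 0 ≤ x * (1 - tanh x ^ 2) := mul_nonneg hx.le (by linarith [tanh_sq_lt_one x])
  have hle_div_sq : (tanh x - x * (1 - tanh x ^ 2)) / x ^ 2 ≤ tanh x / x ^ 2 := by
    gcongr
    linarith
  have hle_sq_div : (tanh x - x * (1 - tanh x ^ 2)) / x ^ 2 ≤ tanh x ^ 2 / x := by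
    rw [div_le_div_iff₀ (by positivity) hx]
    nlinarith [tanh_le_self hx.le]
  calc (tanh x - x * (1 - tanh x ^ 2)) / x ^ 2
      ≤ √(tanh x ^ 2 / x * (tanh x / x ^ 2)) := le_sqrt_mul_of_le_of_le hle_sq_div hle_div_sq
    _ = √((tanh x / x) ^ 3) := by ring_nf
    _ = (tanh x / x) ^ (3 / 2 : ℝ) := by
      rw [sqrt_eq_rpow, ← rpow_natCast, ← rpow_mul (div_nonneg (tanh_nonneg hx.le) hx.le)]
      norm_num
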